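/- arXiv:2306.02649 — 2 statements merged into one kernel-verified Lean document; each statement's English description precedes it below -/
import Mathlib

section
/- Let c be a circle in ℝ² and let c' be a circle orthogonal to c. Then circle inversion with respect to c maps c' onto itself. -/
/-!
The orthogonality relation says that `m` has power `r ^ 2` with respect to the circle `c'`.
Hence, for `p` on `c'`, the law of cosines gives `2 ⟪p - m, m' - m⟫ = ‖p - m‖ ^ 2 + r ^ 2`,
and then `dist (inversion p) m' = r'` is a direct computation. Since the inversion is an
involution, a map of `c'` into itself is automatically onto.
-/

/-- Circle inversion with respect to the circle with center `m` and radius `r`. -/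
noncomputable def circleInversion (m : EuclideanSpace ℝ (Fin 2)) (r : ℝ)
    (p : EuclideanSpace ℝ (Fin 2)) : EuclideanSpace ℝ (Fin 2) :=
  m + (r ^ 2 / dist p m ^ 2) • (p - m)

open Set Function Metric EuclideanGeometry RealInnerProductSpace

theorem Function.Involutive.image_eq_of_mapsTo {α : Type*} {f : α → α} (hf : Involutive f)
    {s : Set α} (hs : MapsTo f s s) : f '' s = s :=
  (LeftInvOn.surjOn (fun x _ ↦ hf x) hs).image_eq_of_mapsTo hs

namespace EuclideanGeometry

variable {V P : Type*} [NormedAddCommGroup V] [InnerProductSpace ℝ V] [MetricSpace P]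
  [NormedAddTorsor V P] {c c' x : P} {R R' : ℝ}

theorem dist_inversion_eq_of_sq_add_sq_eq_dist_sq (h : R ^ 2 + R' ^ 2 = dist c c' ^ 2)
    (hx : dist x c' = R') : dist (inversion c R x) c' = R' := by
  rcases eq_or_ne x c with rfl | hxc
  · simpa using hx
  set v := x -ᵥ c
  set w := c' -ᵥ c
  have hv : ‖v‖ = dist x c := (dist_eq_norm_vsub V x c).symm
  have hv0 : ‖v‖ ≠ 0 := hv ▸ dist_ne_zero.2 hxc
  have hw : ‖w‖ ^ 2 = R ^ 2 + R' ^ 2 := by rw [h, dist_comm, dist_eq_norm_vsub V]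
  have hvw : ‖v - w‖ = R' := by rw [vsub_sub_vsub_cancel_right, ← dist_eq_norm_vsub, hx]
  have hinner : 2 * ⟪v, w⟫ = ‖v‖ ^ 2 + R ^ 2 := by
    have := norm_sub_sq_real v w
    rw [hvw, hw] at this
    linarith
  have himage : inversion c R x -ᵥ c' = (R / ‖v‖) ^ 2 • v - w := by
    rw [← vsub_sub_vsub_cancel_right _ c' c, inversion_vsub_center, hv]
  have hsq : dist (inversion c R x) c' ^ 2 = R' ^ 2 := by
    rw [dist_eq_norm_vsub V, himage, norm_sub_sq_real, norm_smul, real_inner_smul_left, hw,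
      Real.norm_of_nonneg (sq_nonneg _)]
    have ht : (R / ‖v‖) ^ 2 * ‖v‖ ^ 2 = R ^ 2 := by field_simp
    linear_combination (-(R / ‖v‖) ^ 2) * hinner + ((R / ‖v‖) ^ 2 - 1) * ht
  exact (pow_left_inj₀ dist_nonneg (hx ▸ dist_nonneg) two_ne_zero).1 hsq

theorem image_inversion_sphere_of_sq_add_sq_eq_dist_sq (hR : R ≠ 0)
    (h : R ^ 2 + R' ^ 2 = dist c c' ^ 2) : inversion c R '' sphere c' R' = sphere c' R' :=
  (inversion_involutive c hR).image_eq_of_mapsTo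
    fun _ hx ↦ dist_inversion_eq_of_sq_add_sq_eq_dist_sq h hx

end EuclideanGeometry

theorem circleInversion_eq_inversion (m : EuclideanSpace ℝ (Fin 2)) (r : ℝ) :
    circleInversion m r = inversion m r := by
  ext1 p
  rw [circleInversion, inversion, div_pow, vsub_eq_sub, vadd_eq_add, add_comm]

theorem circleInversion_orthogonal_circle_invariant_general (m m' : EuclideanSpace ℝ (Fin 2))
    (r r' : ℝ) (hr : 0 < r)
    (horth : r ^ 2 + r' ^ 2 = dist m m' ^ 2) :
    circleInversion m r '' {p | dist p m' = r'} = {p | dist p m' = r'} := by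
  rw [circleInversion_eq_inversion]
  exact image_inversion_sphere_of_sq_add_sq_eq_dist_sq hr.ne' horth

/-- Inversion in a circle `c` maps any circle orthogonal to `c` onto itself. -/
theorem circleInversion_orthogonal_circle_invariant (m m' : EuclideanSpace ℝ (Fin 2))
    (r r' : ℝ) (hr : 0 < r) (hr' : 0 < r')
    (horth : r ^ 2 + r' ^ 2 = dist m m' ^ 2) :
    circleInversion m r '' {p | dist p m' = r'} = {p | dist p m' = r'} :=
  circleInversion_orthogonal_circle_invariant_general m m' r r' hr horth
end

section
/- Let v₀, v₁, v₂ be vertices of a simple arc-triangle with interior angles satisfying θ₀ = θ₁ ∈ [π, 3π/2) and θ₂ = π, where the side v₀v₂ is drawn as a circular arc a₁ (not a line segment) with underlying circle c₁. Then v₀, v₁, v₂ are not collinear, the circumcircle of {v₀, v₁, v₂} equals c₁, and v₁ lies on c₁ \ a₁. -/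
/-!
The chord of an arc with start tangent direction `n`, signed sweep `εΔ` and radius `r` is
`2 r sin(Δ/2) · exp(i εΔ/2) · n`, and its end tangent direction is `exp(i εΔ) · n`. In these terms
the angle conditions `θ₂ = π` (the sides `v₁v₂` and `v₂v₀` are tangent at `v₂`) and `θ₀ = θ₁`,
together with the closing of the chord triangle, force `r₁ ε₂ = r₂ ε₁`. So these two sides have
the same radius and orientation, and tangency at `v₂` puts them on one circle, which then carries
all three vertices. If the arc `v₂v₀` passed through `v₁` it would, since `v₀ ≠ v₁`, overlap the
arc `v₁v₂` along a whole subarc, contradicting simplicity.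
-/

open Complex Real

/-- The point of the circle with center `γ`, orientation `ε` (`1` = counterclockwise,
`-1` = clockwise), reached after sweeping an angle `t` starting from the point `a`. -/
noncomputable def arcPoint (γ : ℂ) (ε : ℝ) (a : ℂ) (t : ℝ) : ℂ :=
  γ + Complex.exp (((ε * t : ℝ) : ℂ) * Complex.I) * (a - γ)

/-- The set of points of the arc starting at `a`, around center `γ` with orientation `ε`,
sweeping a total angle `Δ`. -/
noncomputable def arcSet (γ : ℂ) (ε : ℝ) (a : ℂ) (Δ : ℝ) : Set ℂ :=
  arcPoint γ ε a '' Set.Icc 0 Δ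

/-- Tangent vector (in direction of travel) at a point `p` of a circle with center `γ`
traversed with orientation `ε`. -/
noncomputable def arcTangent (γ : ℂ) (ε : ℝ) (p : ℂ) : ℂ :=
  (ε : ℂ) * Complex.I * (p - γ)

lemma Real.sin_mul_of_sign {ε : ℝ} (hε : ε = 1 ∨ ε = -1) (x : ℝ) :
    Real.sin (ε * x) = ε * Real.sin x := by
  rcases hε with rfl | rfl <;> simp

lemma Real.cos_mul_of_sign {ε : ℝ} (hε : ε = 1 ∨ ε = -1) (x : ℝ) :
    Real.cos (ε * x) = Real.cos x := by
  rcases hε with rfl | rfl <;> simp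

lemma arcPoint_zero (γ : ℂ) (ε : ℝ) (a : ℂ) : arcPoint γ ε a 0 = a := by
  simp [arcPoint]

lemma arcPoint_arcPoint (γ : ℂ) (ε : ℝ) (a : ℂ) (s t : ℝ) :
    arcPoint γ ε (arcPoint γ ε a s) t = arcPoint γ ε a (s + t) := by
  simp only [arcPoint, add_sub_cancel_left, ← mul_assoc, ← Complex.exp_add]
  push_cast; ring_nf

lemma arcPoint_two_pi {ε : ℝ} (hε : ε = 1 ∨ ε = -1) (γ a : ℂ) :
    arcPoint γ ε a (2 * π) = a := by
  rcases hε with rfl | rfl <;> simp [arcPoint, Complex.exp_neg]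

lemma norm_arcPoint_sub (γ : ℂ) (ε : ℝ) (a : ℂ) (t : ℝ) :
    ‖arcPoint γ ε a t - γ‖ = ‖a - γ‖ := by
  rw [arcPoint, add_sub_cancel_left, norm_mul, Complex.norm_exp_ofReal_mul_I, one_mul]

lemma arcPoint_injOn {γ a : ℂ} {ε : ℝ} (ha : a ≠ γ) (hε : ε = 1 ∨ ε = -1) (s : ℝ) :
    Set.InjOn (arcPoint γ ε a) (Set.Ico s (s + 2 * π)) := by
  intro x hx y hy hxy
  have hexp : Complex.exp (((ε * x - ε * y : ℝ) : ℂ) * I) = 1 := by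
    have := mul_right_cancel₀ (sub_ne_zero.2 ha) (add_left_cancel hxy)
    rw [ofReal_sub, sub_mul, Complex.exp_sub, this, div_self (Complex.exp_ne_zero _)]
  have hcos : Real.cos (x - y) = 1 := by
    rw [← Real.cos_mul_of_sign hε, mul_sub, ← Complex.exp_ofReal_mul_I_re, hexp, one_re]
  rw [← sub_eq_zero, ← Real.cos_eq_one_iff_of_lt_of_lt (by linarith [hx.1, hy.2])
    (by linarith [hx.2, hy.1])]
  exact hcos

lemma arcPoint_ne_self {γ a : ℂ} {ε Δ : ℝ} (ha : a ≠ γ) (hε : ε = 1 ∨ ε = -1)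
    (hΔ : Δ ∈ Set.Ioo 0 (2 * π)) : arcPoint γ ε a Δ ≠ a := fun h =>
  hΔ.1.ne' <| arcPoint_injOn ha hε 0 ⟨hΔ.1.le, by linarith [hΔ.2]⟩
    ⟨le_rfl, by linarith [Real.pi_pos]⟩ (h.trans (arcPoint_zero γ ε a).symm)

lemma norm_arcTangent {ε : ℝ} (hε : ε = 1 ∨ ε = -1) (γ p : ℂ) :
    ‖arcTangent γ ε p‖ = ‖p - γ‖ := by
  rcases hε with rfl | rfl <;> simp [arcTangent]

lemma arcTangent_arcPoint (γ : ℂ) (ε : ℝ) (a : ℂ) (t : ℝ) :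
    arcTangent γ ε (arcPoint γ ε a t) =
      Complex.exp (((ε * t / 2 : ℝ) : ℂ) * I) ^ 2 * arcTangent γ ε a := by
  rw [← Complex.exp_nat_mul]
  simp only [arcTangent, arcPoint]
  push_cast; ring_nf

lemma arcPoint_sub_self {ε : ℝ} (hε : ε = 1 ∨ ε = -1) (γ a : ℂ) (t : ℝ) :
    arcPoint γ ε a t - a =
      ((2 * Real.sin (t / 2) * ‖a - γ‖ : ℝ) : ℂ) * Complex.exp (((ε * t / 2 : ℝ) : ℂ) * I) *
        (arcTangent γ ε a / ‖arcTangent γ ε a‖) := by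
  rcases eq_or_ne a γ with rfl | ha
  · simp [arcPoint]
  have hτ : (‖arcTangent γ ε a‖ : ℂ) ≠ 0 := by
    rw [ofReal_ne_zero, norm_arcTangent hε, norm_ne_zero_iff, sub_ne_zero]; exact ha
  have hdouble : Complex.exp (((ε * t : ℝ) : ℂ) * I) =
      Complex.exp (((ε * t / 2 : ℝ) : ℂ) * I) ^ 2 := by
    rw [← Complex.exp_nat_mul]; push_cast; ring_nf
  have hpyth := Real.cos_sq_add_sin_sq (ε * t / 2)
  suffices arcPoint γ ε a t - a =
      ((2 * Real.sin (t / 2) : ℝ) : ℂ) * Complex.exp (((ε * t / 2 : ℝ) : ℂ) * I) *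
        arcTangent γ ε a by
    rw [this, ← norm_arcTangent hε γ a]
    push_cast
    field_simp [hτ]
  rw [arcPoint, arcTangent, hdouble, Complex.exp_mul_I, ← ofReal_cos, ← ofReal_sin]
  rw [mul_div_assoc, Real.sin_mul_of_sign hε] at hpyth ⊢
  generalize Real.cos (ε * (t / 2)) = c at *
  generalize Real.sin (t / 2) = s at *
  push_cast
  have hpythC : (c : ℂ) ^ 2 + (ε * s : ℂ) ^ 2 = 1 := by exact_mod_cast hpyth
  linear_combination (a - γ) * hpythC - (ε * s : ℂ) ^ 2 * (a - γ) * I_sq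

lemma arcTangent_arcPoint_div_norm (γ : ℂ) (ε : ℝ) (a : ℂ) (t : ℝ) :
    arcTangent γ ε (arcPoint γ ε a t) / ‖arcTangent γ ε (arcPoint γ ε a t)‖ =
      Complex.exp (((ε * t / 2 : ℝ) : ℂ) * I) ^ 2 *
        (arcTangent γ ε a / ‖arcTangent γ ε a‖) := by
  rw [arcTangent_arcPoint, norm_mul, norm_pow, Complex.norm_exp_ofReal_mul_I, one_pow, one_mul,
    mul_div_assoc]

lemma Complex.eq_of_div_norm_eq {x y : ℂ} (h : x / ‖x‖ = y / ‖y‖) (hn : ‖x‖ = ‖y‖) : x = y := by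
  rcases eq_or_ne x 0 with rfl | hx
  · exact (norm_eq_zero.1 (hn.symm.trans norm_zero)).symm
  · rw [← hn] at h
    exact (div_left_inj' (ofReal_ne_zero.2 (norm_ne_zero_iff.2 hx))).1 h

open ComplexConjugate in
/-- In an arc-triangle, `nᵢ` is the unit start tangent of side `i`, `hᵢ = exp(i εᵢΔᵢ/2)` and
`aᵢ hᵢ nᵢ` its chord, and `E = exp(i θ₀)`; the hypotheses are the angle conditions at the three
vertices and the closing of the chord triangle. -/
lemma im_mul_eq_of_turns {E h₀ h₁ h₂ n₀ n₁ n₂ : ℂ} {a₀ a₁ a₂ : ℝ}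
    (hh₀ : h₀ ≠ 0) (hh₁ : h₁ ≠ 0) (hh₂ : ‖h₂‖ = 1) (hn₀ : n₀ ≠ 0) (hn₁ : n₁ ≠ 0)
    (hturn₀ : E * n₀ = -(h₂ ^ 2 * n₂)) (hturn₁ : E * n₁ = -(h₀ ^ 2 * n₀))
    (hturn₂ : n₂ = h₁ ^ 2 * n₁)
    (hclose : a₀ * h₀ * n₀ + a₁ * h₁ * n₁ + a₂ * h₂ * n₂ = 0) :
    a₁ * h₂.im = a₂ * h₁.im := by
  have hsq : E ^ 2 = (h₀ * h₁ * h₂) ^ 2 := by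
    refine mul_right_cancel₀ (mul_ne_zero hn₀ hn₁) ?_
    linear_combination (E * n₁) * hturn₀ - (h₂ ^ 2 * n₂) * hturn₁ + (h₂ ^ 2 * h₀ ^ 2 * n₀) * hturn₂
  obtain ⟨σ, hσ⟩ : ∃ σ : ℝ, E = σ * (h₀ * h₁ * h₂) := by
    rcases sq_eq_sq_iff_eq_or_eq_neg.1 hsq with h | h
    · exact ⟨1, by simp [h]⟩
    · exact ⟨-1, by simp [h]⟩
  have hreal : a₁ + a₂ * h₁ * h₂ = σ * a₀ * h₂ := by
    refine mul_left_cancel₀ (mul_ne_zero (mul_ne_zero hh₀ hh₁) hn₁) ?_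
    linear_combination h₀ * hclose - a₂ * h₀ * h₂ * hturn₂ - a₀ * hturn₁ + a₀ * n₁ * hσ
  have hconj : h₂ * conj h₂ = 1 := by
    rw [mul_conj, normSq_eq_norm_sq, hh₂]; norm_num
  have hreal' : a₁ * conj h₂ + a₂ * h₁ = σ * a₀ := by
    linear_combination conj h₂ * hreal + (σ * a₀ - a₂ * h₁) * hconj
  have him := congrArg Complex.im hreal'
  simp only [add_im, mul_im, ofReal_re, ofReal_im, conj_re, conj_im, mul_neg, zero_mul, mul_zero,
    add_zero] at him
  linarith

lemma eq_and_eq_of_mul_eq_mul_of_sign {ε₁ ε₂ ρ₁ ρ₂ : ℝ} (hε₁ : ε₁ = 1 ∨ ε₁ = -1)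
    (hε₂ : ε₂ = 1 ∨ ε₂ = -1) (hρ₁ : 0 < ρ₁) (hρ₂ : 0 < ρ₂) (h : ρ₁ * ε₂ = ρ₂ * ε₁) :
    ε₁ = ε₂ ∧ ρ₁ = ρ₂ := by
  rcases hε₁ with rfl | rfl <;> rcases hε₂ with rfl | rfl <;> constructor <;> linarith

lemma eq_of_arcTangent_div_norm_eq {γ γ' p : ℂ} {ε : ℝ} (hε : ε = 1 ∨ ε = -1)
    (hr : ‖p - γ‖ = ‖p - γ'‖)
    (h : arcTangent γ ε p / ‖arcTangent γ ε p‖ = arcTangent γ' ε p / ‖arcTangent γ' ε p‖) :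
    γ = γ' := by
  have htangent := Complex.eq_of_div_norm_eq h (by rw [norm_arcTangent hε, norm_arcTangent hε, hr])
  have hεI : (ε : ℂ) * I ≠ 0 := mul_ne_zero (by rcases hε with rfl | rfl <;> simp) I_ne_zero
  simpa using mul_left_cancel₀ hεI htangent

theorem arcTriangle_radius_mul_orientation_eq
    (v γ : Fin 3 → ℂ) (ε Δ θ : Fin 3 → ℝ)
    (hγ : ∀ i, v i ≠ γ i) (hε : ∀ i, ε i = 1 ∨ ε i = -1) (hΔ : ∀ i, Δ i ∈ Set.Ioo 0 (2 * π))
    (hend : ∀ i, arcPoint (γ i) (ε i) (v i) (Δ i) = v (i + 1))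
    (hθ : ∀ i,
      Complex.exp ((θ i : ℂ) * Complex.I) *
          (arcTangent (γ i) (ε i) (v i) / ‖arcTangent (γ i) (ε i) (v i)‖) =
        -arcTangent (γ (i + 2)) (ε (i + 2)) (v i) / ‖arcTangent (γ (i + 2)) (ε (i + 2)) (v i)‖)
    (h01 : θ 0 = θ 1) (h2 : θ 2 = π) :
    ‖v 1 - γ 1‖ * ε 2 = ‖v 2 - γ 2‖ * ε 1 := by
  set n : Fin 3 → ℂ := fun i => arcTangent (γ i) (ε i) (v i) / ‖arcTangent (γ i) (ε i) (v i)‖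
  set h : Fin 3 → ℂ := fun i => Complex.exp (((ε i * Δ i / 2 : ℝ) : ℂ) * I)
  set a : Fin 3 → ℝ := fun i => 2 * Real.sin (Δ i / 2) * ‖v i - γ i‖
  have hn : ∀ i, n i ≠ 0 := fun i => by
    have hτ : ‖arcTangent (γ i) (ε i) (v i)‖ ≠ 0 := by
      rw [norm_arcTangent (hε i), norm_ne_zero_iff, sub_ne_zero]; exact hγ i
    exact div_ne_zero (norm_ne_zero_iff.1 hτ) (ofReal_ne_zero.2 hτ)
  have hchord : ∀ i, v (i + 1) - v i = a i * h i * n i := fun i => by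
    rw [← hend i, arcPoint_sub_self (hε i)]
  have hturn : ∀ i, Complex.exp ((θ i : ℂ) * I) * n i = -(h (i + 2) ^ 2 * n (i + 2)) := fun i => by
    have hprev : arcPoint (γ (i + 2)) (ε (i + 2)) (v (i + 2)) (Δ (i + 2)) = v i := by
      rw [hend]; fin_cases i <;> rfl
    have hdir := arcTangent_arcPoint_div_norm (γ (i + 2)) (ε (i + 2)) (v (i + 2)) (Δ (i + 2))
    rw [hprev] at hdir
    rw [← hdir, ← neg_div]
    exact hθ i
  have hturn₀ : Complex.exp ((θ 0 : ℂ) * I) * n 0 = -(h 2 ^ 2 * n 2) := hturn 0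
  have hturn₁ : Complex.exp ((θ 0 : ℂ) * I) * n 1 = -(h 0 ^ 2 * n 0) := h01 ▸ hturn 1
  have hturn₂ : n 2 = h 1 ^ 2 * n 1 := by simpa [h2, Complex.exp_pi_mul_I] using hturn 2
  have hclose : (a 0 : ℂ) * h 0 * n 0 + a 1 * h 1 * n 1 + a 2 * h 2 * n 2 = 0 := by
    have hchord₀ : v 1 - v 0 = a 0 * h 0 * n 0 := hchord 0
    have hchord₁ : v 2 - v 1 = a 1 * h 1 * n 1 := hchord 1
    have hchord₂ : v 0 - v 2 = a 2 * h 2 * n 2 := hchord 2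
    linear_combination -hchord₀ - hchord₁ - hchord₂
  have hsin : a 1 * (h 2).im = a 2 * (h 1).im :=
    im_mul_eq_of_turns (Complex.exp_ne_zero _) (Complex.exp_ne_zero _)
      (Complex.norm_exp_ofReal_mul_I _) (hn 0) (hn 1) hturn₀ hturn₁ hturn₂ hclose
  have hsin_pos : ∀ i, 0 < Real.sin (Δ i / 2) := fun i =>
    Real.sin_pos_of_pos_of_lt_pi (by linarith [(hΔ i).1]) (by linarith [(hΔ i).2])
  have him : ∀ i, (h i).im = ε i * Real.sin (Δ i / 2) := fun i => by
    rw [Complex.exp_ofReal_mul_I_im, mul_div_assoc, Real.sin_mul_of_sign (hε i)]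
  simp only [a, him] at hsin
  refine mul_left_cancel₀ (mul_pos (hsin_pos 1) (hsin_pos 2)).ne' ?_
  linear_combination hsin / 2

theorem arcTriangle_center_eq_and_orientation_eq
    (v γ : Fin 3 → ℂ) (ε Δ θ : Fin 3 → ℝ)
    (hγ : ∀ i, v i ≠ γ i) (hε : ∀ i, ε i = 1 ∨ ε i = -1) (hΔ : ∀ i, Δ i ∈ Set.Ioo 0 (2 * π))
    (hend : ∀ i, arcPoint (γ i) (ε i) (v i) (Δ i) = v (i + 1))
    (hθ : ∀ i,
      Complex.exp ((θ i : ℂ) * Complex.I) *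
          (arcTangent (γ i) (ε i) (v i) / ‖arcTangent (γ i) (ε i) (v i)‖) =
        -arcTangent (γ (i + 2)) (ε (i + 2)) (v i) / ‖arcTangent (γ (i + 2)) (ε (i + 2)) (v i)‖)
    (h01 : θ 0 = θ 1) (h2 : θ 2 = π) :
    γ 1 = γ 2 ∧ ε 1 = ε 2 := by
  have hρ : ∀ i, 0 < ‖v i - γ i‖ := fun i => norm_pos_iff.2 (sub_ne_zero.2 (hγ i))
  obtain ⟨hε₁₂, hρ₁₂⟩ := eq_and_eq_of_mul_eq_mul_of_sign (hε 1) (hε 2) (hρ 1) (hρ 2)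
    (arcTriangle_radius_mul_orientation_eq v γ ε Δ θ hγ hε hΔ hend hθ h01 h2)
  have hend₁ : arcPoint (γ 1) (ε 1) (v 1) (Δ 1) = v 2 := hend 1
  have hnorm := norm_arcPoint_sub (γ 1) (ε 1) (v 1) (Δ 1)
  rw [hend₁] at hnorm
  have htangent := hθ 2
  simp only [Fin.reduceAdd, h2, Complex.exp_pi_mul_I, neg_one_mul, neg_div, neg_inj, hε₁₂]
    at htangent
  exact ⟨eq_of_arcTangent_div_norm_eq (hε 2) (hnorm.trans hρ₁₂) htangent.symm, hε₁₂⟩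

lemma not_mem_arcSet_of_continuation {γ a : ℂ} {ε Δ₁ Δ₂ : ℝ} (ha : a ≠ γ)
    (hε : ε = 1 ∨ ε = -1) (hΔ₁ : Δ₁ ∈ Set.Ioo 0 (2 * π)) (hΔ₂ : Δ₂ < 2 * π)
    (hne : arcPoint γ ε (arcPoint γ ε a Δ₁) Δ₂ ≠ a)
    (hfin : (arcSet γ ε a Δ₁ ∩ arcSet γ ε (arcPoint γ ε a Δ₁) Δ₂).Finite) :
    a ∉ arcSet γ ε (arcPoint γ ε a Δ₁) Δ₂ := by
  set b := arcPoint γ ε a Δ₁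
  rintro ⟨t, ht, hta⟩
  have hb : b ≠ γ := by
    rw [← sub_ne_zero, ← norm_ne_zero_iff, norm_arcPoint_sub, norm_ne_zero_iff, sub_ne_zero]
    exact ha
  have hback : arcPoint γ ε b (2 * π - Δ₁) = a := by
    rw [arcPoint_arcPoint, add_sub_cancel, arcPoint_two_pi hε]
  have ht' : t = 2 * π - Δ₁ :=
    arcPoint_injOn hb hε 0 ⟨ht.1, by linarith [ht.2]⟩ ⟨by linarith [hΔ₁.2], by linarith [hΔ₁.1]⟩
      (hta.trans hback.symm)
  have hlt : 2 * π - Δ₁ < Δ₂ :=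
    lt_of_le_of_ne (ht' ▸ ht.2) fun h => hne (h ▸ hback)
  have hinj : Set.InjOn (arcPoint γ ε b) (Set.Icc (2 * π - Δ₁) Δ₂) :=
    (arcPoint_injOn hb hε 0).mono (Set.Icc_subset_Ico (by linarith [hΔ₁.2]) (by linarith))
  refine Set.Icc_infinite hlt (Set.Finite.of_finite_image (hfin.subset ?_) hinj)
  rintro _ ⟨s, hs, rfl⟩
  refine ⟨⟨s - (2 * π - Δ₁), ⟨by linarith [hs.1], by linarith [hs.2]⟩, ?_⟩,
    s, ⟨by linarith [hs.1, hΔ₁.2], hs.2⟩, rfl⟩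
  rw [← hback, arcPoint_arcPoint, add_sub_cancel]

theorem arcTriangle_apex_on_circle_general
    (v γ : Fin 3 → ℂ) (ε Δ θ : Fin 3 → ℝ)
    -- side `i` is a nondegenerate circular arc from `v i` to `v (i+1)`
    (hγ : ∀ i, v i ≠ γ i)
    (hε : ∀ i, ε i = 1 ∨ ε i = -1)
    (hΔ : ∀ i, Δ i ∈ Set.Ioo 0 (2 * π))
    (hend : ∀ i, arcPoint (γ i) (ε i) (v i) (Δ i) = v (i + 1))
    -- the arc-triangle is simple: two different sides only meet in common vertices
    (hsimple : ∀ i j, i ≠ j →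
      arcSet (γ i) (ε i) (v i) (Δ i) ∩ arcSet (γ j) (ε j) (v j) (Δ j) ⊆ {v 0, v 1, v 2})
    -- `θ i` is the interior angle at vertex `v i`
    (hθ : ∀ i,
      Complex.exp ((θ i : ℂ) * Complex.I) *
          (arcTangent (γ i) (ε i) (v i) / ‖arcTangent (γ i) (ε i) (v i)‖) =
        -arcTangent (γ (i + 2)) (ε (i + 2)) (v i) / ‖arcTangent (γ (i + 2)) (ε (i + 2)) (v i)‖)
    -- the assumptions on the interior angles
    (h01 : θ 0 = θ 1) (h2 : θ 2 = π) :
    ¬ Collinear ℝ ({v 0, v 1, v 2} : Set ℂ) ∧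
    dist (v 1) (γ 2) = dist (v 2) (γ 2) ∧
    v 1 ∉ arcSet (γ 2) (ε 2) (v 2) (Δ 2) := by
  obtain ⟨hγ₁₂, hε₁₂⟩ := arcTriangle_center_eq_and_orientation_eq v γ ε Δ θ hγ hε hΔ hend hθ h01 h2
  have hend₀ : arcPoint (γ 0) (ε 0) (v 0) (Δ 0) = v 1 := hend 0
  have hend₁ : arcPoint (γ 2) (ε 2) (v 1) (Δ 1) = v 2 := hγ₁₂ ▸ hε₁₂ ▸ hend 1
  have hend₂ : arcPoint (γ 2) (ε 2) (v 2) (Δ 2) = v 0 := hend 2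
  have hv₀ : dist (v 0) (γ 2) = dist (v 2) (γ 2) := by
    rw [dist_eq_norm, dist_eq_norm, ← hend₂, norm_arcPoint_sub]
  have hv₁ : dist (v 1) (γ 2) = dist (v 2) (γ 2) := by
    rw [dist_eq_norm, dist_eq_norm, ← hend₁, norm_arcPoint_sub]
  have hv₀₁ : v 0 ≠ v 1 := hend₀ ▸ (arcPoint_ne_self (hγ 0) (hε 0) (hΔ 0)).symm
  have hv₁₂ : v 1 ≠ v 2 := hend₁ ▸ (arcPoint_ne_self (hγ₁₂ ▸ hγ 1) (hε 2) (hΔ 1)).symm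
  have hv₂₀ : v 2 ≠ v 0 := hend₂ ▸ (arcPoint_ne_self (hγ 2) (hε 2) (hΔ 2)).symm
  refine ⟨?_, hv₁, ?_⟩
  · rw [← affineIndependent_iff_not_collinear_set]
    exact EuclideanGeometry.Cospherical.affineIndependent_of_ne
      ⟨γ 2, dist (v 2) (γ 2), by simp [hv₀, hv₁]⟩ hv₀₁ hv₂₀.symm hv₁₂
  · have hfin := (Set.toFinite _).subset (hsimple 1 2 (by decide))
    rw [hγ₁₂, hε₁₂, ← hend₁] at hfin
    rw [← hend₁]
    exact not_mem_arcSet_of_continuation (hγ₁₂ ▸ hγ 1) (hε 2) (hΔ 1) (hΔ 2).2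
      (by rw [hend₁, hend₂]; exact hv₀₁) hfin

/-- Lemma 5 of the paper: let `v 0, v 1, v 2` be the vertices (in clockwise order,
interior on the right) of a simple arc-triangle with interior angles
`θ 0 = θ 1 ∈ [π, 3π/2)` and `θ 2 = π`, in which the side from `v 2` to `v 0`
(the side `a₁` opposite `v 1`, joining `v 0` and `v 2`) is drawn as a genuine circular
arc (not a line segment) with underlying circle `c₁` (center `γ 2`).  Then the three
vertices are not collinear, the unique circle through them is `c₁` — in particular `v 1`
lies on `c₁` — and `v 1` lies on `c₁ \ a₁`.

Side `i` runs from `v i` to `v (i + 1)`; it is the arc with center `γ i`, orientation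
`ε i` and sweep angle `Δ i`; `θ i` is the interior angle at `v i`, measured from the
outgoing tangent to the reversed incoming tangent. -/
theorem arcTriangle_apex_on_circle
    (v γ : Fin 3 → ℂ) (ε Δ θ : Fin 3 → ℝ)
    -- side `i` is a nondegenerate circular arc from `v i` to `v (i+1)`
    (hγ : ∀ i, v i ≠ γ i)
    (hε : ∀ i, ε i = 1 ∨ ε i = -1)
    (hΔ : ∀ i, Δ i ∈ Set.Ioo 0 (2 * π))
    (hend : ∀ i, arcPoint (γ i) (ε i) (v i) (Δ i) = v (i + 1))
    -- the arc-triangle is simple: two different sides only meet in common vertices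
    (hsimple : ∀ i j, i ≠ j →
      arcSet (γ i) (ε i) (v i) (Δ i) ∩ arcSet (γ j) (ε j) (v j) (Δ j) ⊆ {v 0, v 1, v 2})
    -- `θ i` is the interior angle at vertex `v i`
    (hθmem : ∀ i, θ i ∈ Set.Ico 0 (2 * π))
    (hθ : ∀ i,
      Complex.exp ((θ i : ℂ) * Complex.I) *
          (arcTangent (γ i) (ε i) (v i) / ‖arcTangent (γ i) (ε i) (v i)‖) =
        -arcTangent (γ (i + 2)) (ε (i + 2)) (v i) / ‖arcTangent (γ (i + 2)) (ε (i + 2)) (v i)‖)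
    -- the assumptions on the interior angles
    (h01 : θ 0 = θ 1) (h0mem : θ 0 ∈ Set.Ico π (3 * π / 2)) (h2 : θ 2 = π) :
    ¬ Collinear ℝ ({v 0, v 1, v 2} : Set ℂ) ∧
    dist (v 1) (γ 2) = dist (v 2) (γ 2) ∧
    v 1 ∉ arcSet (γ 2) (ε 2) (v 2) (Δ 2) :=
  arcTriangle_apex_on_circle_general v γ ε Δ θ hγ hε hΔ hend hsimple hθ h01 h2
end
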